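/- arXiv:2108.03717 — 3 statements merged into one kernel-verified Lean document; each statement's English description precedes it below -/
import Mathlib

section
/- Let p : [a,b] → ℝ^d be absolutely continuous with p(t) ≠ 0 for all t, let u(t) = p(t)/|p(t)|, and suppose there is a measurable b_fun : [a,b] → ℝ^d with |b_fun(t)| ≤ M a.e. and p'(t) = -|p(t)| b_fun(t) a.e. Then for a.e. t, u'(t) = -b_fun(t) + (u(t)·b_fun(t)) u(t) and |u'(t)| ≤ M, so u is Lipschitz continuous on [a,b] with Lipschitz constant at most M. -/
open MeasureTheory Set Filter
open scoped Interval

/-- Dunkl–Williams inequality in an inner product space. -/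
theorem dunkl_williams {E : Type*} [NormedAddCommGroup E] [InnerProductSpace ℝ E]
    (x y : E) (hx : x ≠ 0) (hy : y ≠ 0) :
    (‖x‖ + ‖y‖) * ‖(‖x‖⁻¹ • x) - (‖y‖⁻¹ • y)‖ ≤ 2 * ‖x - y‖ := by
  set A := ‖x‖ with hA
  set B := ‖y‖ with hB
  have hA0 : 0 < A := norm_pos_iff.mpr hx
  have hB0 : 0 < B := norm_pos_iff.mpr hy
  set t := (inner ℝ x y : ℝ) with ht
  have hCS : |t| ≤ A * B := abs_real_inner_le_norm x y
  set N := ‖(‖x‖⁻¹ • x) - (‖y‖⁻¹ • y)‖ with hNdef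
  have h1 : N^2 = 2 - 2 * (t / (A*B)) := by
    rw [hNdef, norm_sub_sq_real]
    rw [norm_smul, norm_smul, real_inner_smul_left, real_inner_smul_right]
    simp [abs_of_pos, hA0, hB0, ← hA, ← hB]
    field_simp
    rw [← ht]; ring
  have h1' : N^2 * (A * B) = 2*(A*B) - 2*t := by
    rw [h1]; field_simp
  have h2 : ‖x - y‖^2 = A^2 - 2*t + B^2 := by
    rw [norm_sub_sq_real]
  have hN : 0 ≤ N := norm_nonneg _
  have hxy : 0 ≤ ‖x - y‖ := norm_nonneg _
  have hAB : 0 < A * B := mul_pos hA0 hB0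
  have h3 : 0 ≤ A*B + t := by have := neg_le_of_abs_le hCS; linarith
  have key : ((A + B) * N)^2 ≤ (2 * ‖x - y‖)^2 := by
    have e1 : ((A+B)*N)^2 * (A*B) = (A+B)^2 * (2*(A*B)-2*t) := by
      have : ((A+B)*N)^2 * (A*B) = (A+B)^2 * (N^2 * (A*B)) := by ring
      rw [this, h1']
    have e2 : (2*‖x-y‖)^2 * (A*B) = 4*(A*B)*(A^2-2*t+B^2) := by
      rw [show (2*‖x-y‖)^2 = 4*‖x-y‖^2 by ring, h2]; ring
    have e3 : (A+B)^2 * (2*(A*B)-2*t) ≤ 4*(A*B)*(A^2-2*t+B^2) := by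
      nlinarith [mul_nonneg (sq_nonneg (A-B)) h3]
    have := e1.trans_le (e3.trans_eq e2.symm)
    exact le_of_mul_le_mul_right this hAB
  calc (A + B) * N = Real.sqrt (((A + B) * N)^2) := by rw [Real.sqrt_sq (by positivity)]
    _ ≤ Real.sqrt ((2 * ‖x - y‖)^2) := Real.sqrt_le_sqrt key
    _ = 2 * ‖x - y‖ := Real.sqrt_sq (by positivity)

/-- Derivative of the normalization of a nonvanishing differentiable curve. -/
lemma deriv_unit {E : Type*} [NormedAddCommGroup E] [InnerProductSpace ℝ E]
    (p : ℝ → E) (v : E) (t : ℝ) (hpt : p t ≠ 0) (h : HasDerivAt p (-‖p t‖ • v) t) :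
    HasDerivAt (fun s => ‖p s‖⁻¹ • p s)
      (-v + (inner ℝ (‖p t‖⁻¹ • p t) v : ℝ) • (‖p t‖⁻¹ • p t)) t := by
  have hn0 : (0:ℝ) < ‖p t‖ := norm_pos_iff.mpr hpt
  have hip : (0:ℝ) < (inner ℝ (p t) (p t) : ℝ) := by
    rw [real_inner_self_eq_norm_mul_norm]; positivity
  have hinner : HasDerivAt (fun s => (inner ℝ (p s) (p s) : ℝ))
      (2 * (inner ℝ (p t) ((-‖p t‖ • v : E)) : ℝ)) t := by
    have := HasDerivAt.inner ℝ h h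
    refine this.congr_deriv ?_
    rw [real_inner_comm (-‖p t‖ • v) (p t)]; ring
  have hsqrt : HasDerivAt (fun s => Real.sqrt ((inner ℝ (p s) (p s) : ℝ)))
      ((2 * (inner ℝ (p t) ((-‖p t‖ • v : E)) : ℝ)) / (2 * Real.sqrt ((inner ℝ (p t) (p t) : ℝ)))) t :=
    hinner.sqrt hip.ne'
  have heq : (fun s => Real.sqrt ((inner ℝ (p s) (p s) : ℝ))) = fun s => ‖p s‖ := by
    funext s; rw [real_inner_self_eq_norm_mul_norm, Real.sqrt_mul_self (norm_nonneg _)]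
  have hval : (2 * (inner ℝ (p t) ((-‖p t‖ • v : E)) : ℝ)) / (2 * Real.sqrt ((inner ℝ (p t) (p t) : ℝ)))
      = -(inner ℝ (p t) v : ℝ) := by
    rw [real_inner_self_eq_norm_mul_norm, Real.sqrt_mul_self (norm_nonneg _),
      real_inner_smul_right]
    field_simp
  rw [heq, hval] at hsqrt
  have hinv : HasDerivAt (fun s => ‖p s‖⁻¹) (-(-(inner ℝ (p t) v : ℝ)) / (‖p t‖^2)) t :=
    hsqrt.inv hn0.ne'
  have hsmul := hinv.smul h
  convert hsmul using 1
  · rfl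
  rw [real_inner_smul_left]
  match_scalars
  · field_simp
  · field_simp
    try ring
    try exact Or.inl trivial

/-- if `p` is absolutely continuous and nonvanishing on `[a,b]`, with
`p'(t) = -|p(t)| b_fun(t)` a.e. and `|b_fun| ≤ M` a.e., then `u = p/|p|` satisfies, a.e.,
`u'(t) = -b_fun(t) + (u(t)·b_fun(t)) u(t)`, and `u` is `M`-Lipschitz on `[a,b]`. -/
theorem stmt2 {d : ℕ} (a b M : ℝ) (hab : a ≤ b) (hM : 0 ≤ M)
    (p bfun : ℝ → EuclideanSpace ℝ (Fin d))
    (hp : ∀ t ∈ Set.Icc a b, p t ≠ 0)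
    (hbmeas : Measurable bfun)
    (hbM : ∀ᵐ t : ℝ, t ∈ Set.Icc a b → ‖bfun t‖ ≤ M)
    (hder : ∀ᵐ t : ℝ, t ∈ Set.Icc a b → HasDerivAt p (-‖p t‖ • bfun t) t)
    (hcont : ContinuousOn p (Set.Icc a b))
    (hFTC : ∀ t ∈ Set.Icc a b, p t = p a + ∫ s in a..t, (-‖p s‖) • bfun s) :
    (∀ s ∈ Set.Icc a b, ∀ t ∈ Set.Icc a b,
      ‖(‖p t‖⁻¹ • p t) - (‖p s‖⁻¹ • p s)‖ ≤ M * |t - s|) ∧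
    (∀ᵐ t : ℝ, t ∈ Set.Ioo a b →
      HasDerivAt (fun s => ‖p s‖⁻¹ • p s)
        (-(bfun t) + (inner ℝ (‖p t‖⁻¹ • p t) (bfun t) : ℝ) • (‖p t‖⁻¹ • p t)) t) := by
  have hne : (Icc a b).Nonempty := nonempty_Icc.mpr hab
  obtain ⟨z, hzI, hzmin⟩ := isCompact_Icc.exists_isMinOn hne hcont.norm
  obtain ⟨w, hwI, hwmax⟩ := isCompact_Icc.exists_isMaxOn hne hcont.norm
  set m := ‖p z‖ with hm
  set K := ‖p w‖ with hKdef
  have hm0 : 0 < m := norm_pos_iff.mpr (hp z hzI)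
  have hK0 : 0 ≤ K := norm_nonneg _
  set f : ℝ → EuclideanSpace ℝ (Fin d) := fun σ => (-‖p σ‖) • bfun σ with hf
  have hfaem : AEStronglyMeasurable f (volume.restrict (Icc a b)) := by
    have h1 : AEMeasurable (fun σ => -‖p σ‖) (volume.restrict (Icc a b)) :=
      (hcont.norm.neg.aemeasurable measurableSet_Icc)
    exact (h1.smul hbmeas.aemeasurable).aestronglyMeasurable
  have hbM' : ∀ᵐ σ ∂(volume.restrict (Icc a b)), ‖bfun σ‖ ≤ M := by
    filter_upwards [ae_restrict_of_ae hbM, ae_restrict_mem measurableSet_Icc] with σ h1 h2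
    exact h1 h2
  have hfnorm : ∀ σ : ℝ, ‖f σ‖ = ‖p σ‖ * ‖bfun σ‖ := by
    intro σ
    rw [hf]
    rw [norm_smul, Real.norm_eq_abs, abs_neg, abs_norm]
  have hfbd : ∀ᵐ σ ∂(volume.restrict (Icc a b)), ‖f σ‖ ≤ K * M := by
    filter_upwards [hbM', ae_restrict_mem measurableSet_Icc] with σ h1 h2
    rw [hfnorm σ]
    exact mul_le_mul (hwmax h2) h1 (norm_nonneg _) hK0
  have hfint : IntegrableOn f (Icc a b) := by
    have hc : IntegrableOn (fun _ : ℝ => K * M) (Icc a b) :=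
      integrableOn_const measure_Icc_lt_top.ne
    exact Integrable.mono' hc hfaem hfbd
  have hii : ∀ {s t : ℝ}, s ∈ Icc a b → t ∈ Icc a b → IntervalIntegrable f volume s t := by
    intro s t hs ht
    apply (hfint.mono_set _).intervalIntegrable
    exact uIcc_subset_Icc hs ht
  have hint : ∀ {s t : ℝ}, s ∈ Icc a b → t ∈ Icc a b → p t - p s = ∫ σ in s..t, f σ := by
    intro s t hs ht
    rw [hFTC t ht, hFTC s hs]
    rw [← intervalIntegral.integral_interval_sub_left (hii (left_mem_Icc.mpr hab) ht)
      (hii (left_mem_Icc.mpr hab) hs)]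
    abel
  have hsubI : ∀ {s t : ℝ}, s ∈ Icc a b → t ∈ Icc a b → s ≤ t → Ι s t ⊆ Icc a b := by
    intro s t hs ht hst
    rw [uIoc_of_le hst]
    exact Ioc_subset_Icc_self.trans (Icc_subset_Icc hs.1 ht.2)
  have hstep : ∀ {s t : ℝ}, s ∈ Icc a b → t ∈ Icc a b → s ≤ t →
      ‖p t - p s‖ ≤ K * M * (t - s) := by
    intro s t hs ht hst
    rw [hint hs ht]
    have hb : ∀ᵐ σ ∂(volume.restrict (Ι s t)), ‖f σ‖ ≤ K * M :=
      ae_mono (Measure.restrict_mono (hsubI hs ht hst) le_rfl) hfbd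
    calc ‖∫ σ in s..t, f σ‖ ≤ |∫ _σ in s..t, (K*M)| :=
          intervalIntegral.norm_integral_le_abs_of_norm_le hb intervalIntegrable_const
      _ = K*M*(t-s) := by
          rw [intervalIntegral.integral_const, smul_eq_mul,
            abs_of_nonneg (by nlinarith [mul_nonneg hK0 hM])]
          ring
  have hstep2 : ∀ {s t : ℝ}, s ∈ Icc a b → t ∈ Icc a b → s ≤ t →
      ‖p t - p s‖ ≤ M * (‖p s‖ + K*M*(t-s)) * (t - s) := by
    intro s t hs ht hst
    rw [hint hs ht]
    have hb : ∀ᵐ σ ∂(volume.restrict (Ι s t)), ‖f σ‖ ≤ M * (‖p s‖ + K*M*(t-s)) := by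
      filter_upwards [ae_mono (Measure.restrict_mono (hsubI hs ht hst) le_rfl)
        (ae_restrict_of_ae hbM), ae_restrict_mem measurableSet_uIoc] with σ h1 h2
      have hσ : σ ∈ Icc a b := hsubI hs ht hst h2
      rw [uIoc_of_le hst] at h2
      have h4 : ‖p σ‖ - ‖p s‖ ≤ ‖p σ - p s‖ := norm_sub_norm_le _ _
      have h5 : ‖p σ - p s‖ ≤ K*M*(σ - s) := hstep hs hσ h2.1.le
      have h6 : K*M*(σ-s) ≤ K*M*(t-s) :=
        mul_le_mul_of_nonneg_left (by linarith [h2.2]) (mul_nonneg hK0 hM)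
      have h3 : ‖p σ‖ ≤ ‖p s‖ + K*M*(t-s) := by linarith
      rw [hfnorm σ]
      calc ‖p σ‖ * ‖bfun σ‖ ≤ (‖p s‖ + K*M*(t-s)) * M := by
            apply mul_le_mul h3 (h1 hσ) (norm_nonneg _)
            have : 0 ≤ K*M*(t-s) := mul_nonneg (mul_nonneg hK0 hM) (by linarith)
            positivity
        _ = M * (‖p s‖ + K*M*(t-s)) := by ring
    have hC0 : 0 ≤ M * (‖p s‖ + K*M*(t-s)) := by
      have : 0 ≤ K*M*(t-s) := mul_nonneg (mul_nonneg hK0 hM) (by linarith)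
      positivity
    calc ‖∫ σ in s..t, f σ‖ ≤ |∫ _σ in s..t, (M * (‖p s‖ + K*M*(t-s)))| :=
          intervalIntegral.norm_integral_le_abs_of_norm_le hb intervalIntegrable_const
      _ = M * (‖p s‖ + K*M*(t-s)) * (t - s) := by
          rw [intervalIntegral.integral_const, smul_eq_mul,
            abs_of_nonneg (by nlinarith)]
          ring
  have hlocal : ∀ {s t : ℝ}, s ∈ Icc a b → t ∈ Icc a b → s ≤ t → K*M*(t-s) < 2*m →
      ‖(‖p t‖⁻¹ • p t) - (‖p s‖⁻¹ • p s)‖ * (2*m - K*M*(t-s)) ≤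
        M*(t-s) * (2*(m + K*M*(t-s))) := by
    intro s t hs ht hst hεlt
    set ε := K*M*(t-s) with hεdef
    have hε0 : 0 ≤ ε := mul_nonneg (mul_nonneg hK0 hM) (by linarith)
    set r := ‖p s‖ with hr
    have hrm : m ≤ r := hzmin hs
    have hDW := dunkl_williams (p t) (p s) (hp t ht) (hp s hs)
    have h1 : ‖p t - p s‖ ≤ M * (r + ε) * (t - s) := hstep2 hs ht hst
    have h2 : r - ε ≤ ‖p t‖ := by
      have ha1 := hstep hs ht hst
      have ha2 : ‖p s‖ - ‖p t‖ ≤ ‖p s - p t‖ := norm_sub_norm_le _ _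
      rw [norm_sub_rev] at ha2
      linarith
    set A := ‖(‖p t‖⁻¹ • p t) - (‖p s‖⁻¹ • p s)‖ with hAdef
    have hA0 : 0 ≤ A := norm_nonneg _
    have hMts : 0 ≤ M * (t - s) := mul_nonneg hM (by linarith)
    have h3 : (2*r - ε) * A ≤ 2*M*(r+ε)*(t-s) := by
      nlinarith [mul_nonneg (by linarith : (0:ℝ) ≤ ‖p t‖ - (r - ε)) hA0]
    have hcross : (r+ε)*(2*m-ε) ≤ (m+ε)*(2*r-ε) := by
      nlinarith [mul_nonneg (by linarith : (0:ℝ) ≤ r - m) hε0]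
    have h2mε : 0 < 2*m - ε := by linarith
    have h2rε : 0 < 2*r - ε := by linarith
    have h4 : A*(2*m-ε)*(2*r-ε) ≤ M*(t-s)*(2*(m+ε))*(2*r-ε) := by
      calc A*(2*m-ε)*(2*r-ε) = ((2*r-ε)*A)*(2*m-ε) := by ring
        _ ≤ (2*M*(r+ε)*(t-s))*(2*m-ε) := mul_le_mul_of_nonneg_right h3 h2mε.le
        _ = 2*(M*(t-s))*((r+ε)*(2*m-ε)) := by ring
        _ ≤ 2*(M*(t-s))*((m+ε)*(2*r-ε)) :=
            mul_le_mul_of_nonneg_left hcross (by linarith)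
        _ = M*(t-s)*(2*(m+ε))*(2*r-ε) := by ring
    exact le_of_mul_le_mul_right h4 h2rε
  constructor
  · -- Lipschitz part
    have haux : ∀ s ∈ Icc a b, ∀ t ∈ Icc a b, s ≤ t →
        ‖(‖p t‖⁻¹ • p t) - (‖p s‖⁻¹ • p s)‖ ≤ M * (t - s) := by
      intro s hs t ht hst
      set A := ‖(‖p t‖⁻¹ • p t) - (‖p s‖⁻¹ • p s)‖ with hAdef
      have key : ∀ n : ℕ, 0 < n → K*M*((t-s)/n) < 2*m →
          A * (2*m - K*M*((t-s)/n)) ≤ M*(t-s) * (2*(m + K*M*((t-s)/n))) := by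
        intro n hn hεn
        set δ := (t-s)/(n:ℝ) with hδdef
        have hn0 : (0:ℝ) < n := Nat.cast_pos.mpr hn
        have hδ0 : 0 ≤ δ := div_nonneg (by linarith) hn0.le
        have hnδ : (n:ℝ) * δ = t - s := by
          rw [hδdef]; field_simp
        set x : ℕ → ℝ := fun i => s + i*δ with hxdef
        have hxmono : ∀ i j : ℕ, i ≤ j → x i ≤ x j := by
          intro i j hij
          have : (i:ℝ) ≤ (j:ℝ) := Nat.cast_le.mpr hij
          simp only [hxdef]
          nlinarith
        have hx0 : x 0 = s := by simp [hxdef]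
        have hxn : x n = t := by
          have h1 : s + (n:ℝ)*δ = t := by rw [hnδ]; ring
          simpa [hxdef] using h1
        have hxmem : ∀ i : ℕ, i ≤ n → x i ∈ Icc a b := by
          intro i hi
          have h1 : s ≤ x i := by have := hxmono 0 i (Nat.zero_le _); rwa [hx0] at this
          have h2 : x i ≤ t := by have := hxmono i n hi; rwa [hxn] at this
          exact ⟨hs.1.trans h1, h2.trans ht.2⟩
        have hdiff : ∀ i : ℕ, x (i+1) - x i = δ := by
          intro i; simp only [hxdef]; push_cast; ring
        have hterm : ∀ i ∈ Finset.range n,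
            ‖(‖p (x (i+1))‖⁻¹ • p (x (i+1))) - (‖p (x i)‖⁻¹ • p (x i))‖ * (2*m - K*M*δ)
              ≤ M*δ*(2*(m + K*M*δ)) := by
          intro i hi
          have hi' : i + 1 ≤ n := Finset.mem_range.mp hi
          have h1 := hlocal (hxmem i (le_of_lt (Finset.mem_range.mp hi))) (hxmem (i+1) hi')
            (hxmono i (i+1) (Nat.le_succ _)) (by rw [hdiff i]; exact hεn)
          rw [hdiff i] at h1
          exact h1
        have htele : (‖p t‖⁻¹ • p t) - (‖p s‖⁻¹ • p s) =
            ∑ i ∈ Finset.range n,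
              ((‖p (x (i+1))‖⁻¹ • p (x (i+1))) - (‖p (x i)‖⁻¹ • p (x i))) := by
          rw [Finset.sum_range_sub (fun i => ‖p (x i)‖⁻¹ • p (x i)) n, hxn, hx0]
        have hsum : A ≤ ∑ i ∈ Finset.range n,
            ‖(‖p (x (i+1))‖⁻¹ • p (x (i+1))) - (‖p (x i)‖⁻¹ • p (x i))‖ := by
          rw [hAdef, htele]; exact norm_sum_le _ _
        have h2m : 0 ≤ 2*m - K*M*δ := by linarith
        calc A * (2*m - K*M*δ)
            ≤ (∑ i ∈ Finset.range n,
                ‖(‖p (x (i+1))‖⁻¹ • p (x (i+1))) - (‖p (x i)‖⁻¹ • p (x i))‖) * (2*m-K*M*δ) :=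
              mul_le_mul_of_nonneg_right hsum h2m
          _ = ∑ i ∈ Finset.range n,
                ‖(‖p (x (i+1))‖⁻¹ • p (x (i+1))) - (‖p (x i)‖⁻¹ • p (x i))‖ * (2*m-K*M*δ) :=
              Finset.sum_mul _ _ _
          _ ≤ ∑ _i ∈ Finset.range n, M*δ*(2*(m+K*M*δ)) := Finset.sum_le_sum hterm
          _ = n * (M*δ*(2*(m+K*M*δ))) := by
              rw [Finset.sum_const, Finset.card_range, nsmul_eq_mul]
          _ = M*(t-s)*(2*(m+K*M*δ)) := by rw [← hnδ]; ring
      have hεlim : Tendsto (fun n : ℕ => K*M*((t-s)/(n:ℝ))) atTop (nhds 0) := by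
        have h1 : Tendsto (fun n : ℕ => (t-s)/(n:ℝ)) atTop (nhds 0) :=
          tendsto_const_div_atTop_nhds_zero_nat (t-s)
        have h2 := h1.const_mul (K*M)
        simpa using h2
      have hev : ∀ᶠ n : ℕ in atTop,
          A * (2*m - K*M*((t-s)/(n:ℝ))) ≤ M*(t-s) * (2*(m + K*M*((t-s)/(n:ℝ)))) := by
        filter_upwards [hεlim.eventually (gt_mem_nhds (by linarith : (0:ℝ) < 2*m)),
          eventually_gt_atTop 0] with n h1 h2
        exact key n h2 h1
      have hlim1 : Tendsto (fun n : ℕ => A * (2*m - K*M*((t-s)/(n:ℝ)))) atTop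
          (nhds (A*(2*m - 0))) :=
        ((tendsto_const_nhds (x := (2*m:ℝ))).sub hεlim).const_mul A
      have hlim2 : Tendsto (fun n : ℕ => M*(t-s) * (2*(m + K*M*((t-s)/(n:ℝ))))) atTop
          (nhds (M*(t-s)*(2*(m + 0)))) :=
        (((tendsto_const_nhds (x := (m:ℝ))).add hεlim).const_mul 2).const_mul (M*(t-s))
      have hfin := le_of_tendsto_of_tendsto hlim1 hlim2 hev
      have hfin' : A * (2*m) ≤ M*(t-s)*(2*m) := by
        rw [sub_zero] at hfin; rw [add_zero] at hfin; exact hfin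
      nlinarith [hm0]
    intro s hs t ht
    rcases le_total s t with h | h
    · have h1 := haux s hs t ht h
      rwa [abs_of_nonneg (by linarith)]
    · have h1 := haux t ht s hs h
      rw [norm_sub_rev] at h1
      rw [abs_of_nonpos (by linarith)]
      linarith
  · filter_upwards [hder] with t ht hto
    have htIcc : t ∈ Icc a b := Ioo_subset_Icc_self hto
    exact deriv_unit p (bfun t) t (hp t htIcc) (ht htIcc)
end

section
/- Let φ : ℝ≥0 × Ω̄ → ℝ be differentiable at (t₀, x₀) with ∇φ(t₀,x₀) ≠ 0 (spatial gradient), and let k(t₀,x₀) > 0. If u₀ ∈ 𝕊^{d-1} satisfies lim_{h→0⁺} [φ(t₀+h, x₀ + h k(t₀,x₀) u₀) - φ(t₀,x₀)] / h = -1 and φ satisfies -∂_t φ(t₀,x₀) + |∇φ(t₀,x₀)| k(t₀,x₀) - 1 = 0, then u₀ = -∇φ(t₀,x₀)/|∇φ(t₀,x₀)|. Conversely, this unit vector satisfies the limit condition. -/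
open Filter Topology

/-! The limit is the directional derivative of `φ` along `(1, k₀ u₀)`, namely `∂ₜφ + k₀ ⟪∇φ, u₀⟫`.
By the Hamilton–Jacobi equation it equals `-1` exactly when `⟪∇φ, u₀⟫ = -‖∇φ‖`, which is the
equality case of Cauchy–Schwarz for the unit vector `u₀`. -/

theorem HasFDerivAt.tendsto_slope_along_right {E F : Type*} [NormedAddCommGroup E]
    [NormedSpace ℝ E] [NormedAddCommGroup F] [NormedSpace ℝ F] {f : E → F} {f' : E →L[ℝ] F}
    {p : E} (hf : HasFDerivAt f f' p) (v : E) :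
    Tendsto (fun h : ℝ => h⁻¹ • (f (p + h • v) - f p)) (𝓝[>] 0) (𝓝 (f' v)) := by
  have hline : HasDerivAt (fun h : ℝ => p + h • v) v 0 := by
    simpa using ((hasDerivAt_id (0 : ℝ)).smul_const v).const_add p
  have hf₀ : HasFDerivAt f f' (p + (0 : ℝ) • v) := by simpa using hf
  simpa using (hf₀.comp_hasDerivAt 0 hline).tendsto_slope_zero_right

theorem real_inner_eq_neg_norm_iff_eq_neg_normalize {F : Type*} [NormedAddCommGroup F]
    [InnerProductSpace ℝ F] {g u : F} (hg : g ≠ 0) (hu : ‖u‖ = 1) :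
    inner ℝ g u = -‖g‖ ↔ u = -(‖g‖⁻¹ • g) := by
  have hunit : ‖‖g‖⁻¹ • g‖ = 1 := by simpa using norm_smul_inv_norm (𝕜 := ℝ) hg
  rw [← inner_eq_neg_one_iff_of_norm_eq_one (𝕜 := ℝ) hu hunit, real_inner_smul_right,
    real_inner_comm, inv_mul_eq_iff_eq_mul₀ (norm_ne_zero_iff.mpr hg), mul_neg_one]

/-- if `φ` is differentiable at `(t₀,x₀)` with nonzero spatial gradient `g`
and time derivative `pt`, satisfies the Hamilton–Jacobi equation
`-∂_t φ + |∇φ| k = 1` there, and `k(t₀,x₀) = k₀ > 0`, then a unit vector `u₀` is a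
direction of maximal descent (the one-sided difference quotient tends to `-1`) if and only
if `u₀ = -g/|g|`. -/
theorem stmt6 {d : ℕ} (φ : ℝ → EuclideanSpace ℝ (Fin d) → ℝ)
    (t₀ : ℝ) (x₀ : EuclideanSpace ℝ (Fin d))
    (pt : ℝ) (g : EuclideanSpace ℝ (Fin d)) (hg : g ≠ 0)
    (L : ℝ × EuclideanSpace ℝ (Fin d) →L[ℝ] ℝ)
    (hL : ∀ (s : ℝ) (w : EuclideanSpace ℝ (Fin d)), L (s, w) = pt * s + (inner ℝ g w : ℝ))
    (hdiff : HasFDerivAt (fun p : ℝ × EuclideanSpace ℝ (Fin d) => φ p.1 p.2) L (t₀, x₀))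
    (k₀ : ℝ) (hk₀ : 0 < k₀)
    (hHJ : -pt + ‖g‖ * k₀ - 1 = 0)
    (u₀ : EuclideanSpace ℝ (Fin d)) (hu : ‖u₀‖ = 1) :
    Tendsto (fun h : ℝ => (φ (t₀ + h) (x₀ + (h * k₀) • u₀) - φ t₀ x₀) / h)
        (nhdsWithin 0 (Set.Ioi 0)) (nhds (-1))
      ↔ u₀ = -(‖g‖⁻¹ • g) := by
  have hslope : Tendsto (fun h : ℝ => (φ (t₀ + h) (x₀ + (h * k₀) • u₀) - φ t₀ x₀) / h)
      (𝓝[>] 0) (𝓝 (pt + k₀ * inner ℝ g u₀)) := by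
    have := hdiff.tendsto_slope_along_right (1, k₀ • u₀)
    rw [hL, real_inner_smul_right, mul_one] at this
    refine this.congr fun h => ?_
    simp [div_eq_inv_mul, mul_smul]
  have hlimit : pt + k₀ * inner ℝ g u₀ = -1 ↔ inner ℝ g u₀ = -‖g‖ := by
    constructor
    · intro h
      exact mul_left_cancel₀ hk₀.ne' (by linarith)
    · intro h
      rw [h]
      linarith
  rw [← real_inner_eq_neg_norm_iff_eq_neg_normalize hg hu, ← hlimit]
  exact ⟨fun h => tendsto_nhds_unique hslope h, fun h => h ▸ hslope⟩
end

section
/- Under the hypotheses that k is Lipschitz and K_min ≤ k ≤ K_max with K_min > 0, and that Ω̄ satisfies the geodesic-distance equivalence (H1) with constant D, the value function φ(t₀,x₀) of the minimal time problem satisfies φ(t₀,x₀) ≤ (D/K_min) · d(x₀, Γ) for all (t₀,x₀) ∈ ℝ≥0 × Ω̄, where d(x₀,Γ) = inf_{y∈Γ} |x₀ - y|. In particular φ is bounded. -/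
/-!
Follow the (H1) curve from `x₀` to a nearest point of `Γ` at constant speed `Kmin`: it arrives
after time `ℓ / Kmin ≤ D d(x₀, Γ) / Kmin`. This path is admissible with the control `u = γ' / k`,
of norm at most `Kmin / k ≤ 1`; the path is recovered from `u` because the fundamental theorem of
calculus holds for Lipschitz curves in finite dimension.
-/

open MeasureTheory Set
open scoped NNReal

theorem LipschitzWith.integral_deriv_eq_sub {E : Type*} [NormedAddCommGroup E] [NormedSpace ℝ E]
    [FiniteDimensional ℝ E] {K : ℝ≥0} {f : ℝ → E} (hf : LipschitzWith K f) (a b : ℝ) :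
    ∫ t in a..b, deriv f t = f b - f a := by
  have hIoc : ∀ x y : ℝ, IntegrableOn (deriv f) (Ioc x y) := fun _ _ =>
    .of_bound measure_Ioc_lt_top (stronglyMeasurable_deriv f).aestronglyMeasurable K
      (.of_forall fun _ => norm_deriv_le_of_lipschitz hf)
  have hint : IntervalIntegrable (deriv f) volume a b := ⟨hIoc a b, hIoc b a⟩
  refine (SeparatingDual.eq_iff_forall_dual_eq (R := ℝ)).2 fun g => ?_
  rw [← g.intervalIntegral_comp_comm hint, map_sub]
  refine .trans (intervalIntegral.integral_congr_ae ?_)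
    (g.lipschitz.comp hf).lipschitzOnWith.absolutelyContinuousOnInterval.integral_deriv_eq_sub
  filter_upwards [hf.ae_differentiableAt_real] with t ht _
  exact (g.hasFDerivAt.comp_hasDerivAt t ht.hasDerivAt).deriv.symm

theorem lipschitzWith_mul_sub (v : ℝ≥0) (t₀ : ℝ) :
    LipschitzWith v (fun t : ℝ => (v : ℝ) * (t - t₀)) :=
  LipschitzWith.of_dist_le_mul fun s t => by
    rw [Real.dist_eq, Real.dist_eq, ← mul_sub, sub_sub_sub_cancel_right, abs_mul, NNReal.abs_eq]

theorem LipschitzOnWith.exists_lipschitzWith_traversal {E : Type*} [PseudoMetricSpace E]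
    {c : ℝ → E} {ℓ : ℝ} (hℓ : 0 ≤ ℓ) (hc : LipschitzOnWith 1 c (Icc 0 ℓ)) {v : ℝ≥0}
    (hv : 0 < v) (t₀ : ℝ) :
    ∃ γ : ℝ → E, LipschitzWith v γ ∧ γ t₀ = c 0 ∧ γ (t₀ + ℓ / v) = c ℓ ∧
      ∀ t, γ t ∈ c '' Icc 0 ℓ := by
  refine ⟨fun t => c (projIcc 0 ℓ hℓ (v * (t - t₀))), ?_, ?_, ?_, ?_⟩
  · exact ((hc.to_restrict.comp (LipschitzWith.projIcc hℓ)).comp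
      (lipschitzWith_mul_sub v t₀)).weaken (by simp)
  · simp
  · simp [mul_div_cancel₀ ℓ (NNReal.coe_ne_zero.2 hv.ne')]
  · exact fun t => ⟨_, (projIcc 0 ℓ hℓ _).2, rfl⟩

theorem LipschitzWith.exists_unit_control {E : Type*} [NormedAddCommGroup E] [NormedSpace ℝ E]
    [FiniteDimensional ℝ E] {V : ℝ≥0} {γ : ℝ → E} (hγ : LipschitzWith V γ) (hV : 0 < V)
    {k : ℝ → E → ℝ} {t₀ : ℝ} (hk : ∀ t ≥ t₀, (V : ℝ) ≤ k t (γ t)) :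
    ∃ u : ℝ → E, (∀ t, ‖u t‖ ≤ 1) ∧ ∀ t ≥ t₀, γ t = γ t₀ + ∫ s in t₀..t, k s (γ s) • u s := by
  -- `max _ V` equals `k` for `t ≥ t₀` and keeps `‖u t‖ ≤ 1` before `t₀`
  refine ⟨fun t => (max (k t (γ t)) V)⁻¹ • deriv γ t, fun t => ?_, fun t ht => ?_⟩
  · rw [norm_smul, norm_inv, Real.norm_of_nonneg (V.coe_nonneg.trans (le_max_right _ _))]
    exact inv_mul_le_one_of_le₀ ((norm_deriv_le_of_lipschitz hγ).trans (le_max_right _ _))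
      (V.coe_nonneg.trans (le_max_right _ _))
  · have hspeed : ∀ s ∈ uIcc t₀ t, k s (γ s) • (max (k s (γ s)) V)⁻¹ • deriv γ s = deriv γ s := by
      intro s hs
      rw [uIcc_of_le ht] at hs
      have hks := hk s hs.1
      rw [max_eq_left hks, smul_inv_smul₀ ((NNReal.coe_pos.2 hV).trans_le hks).ne']
    rw [intervalIntegral.integral_congr hspeed, hγ.integral_deriv_eq_sub, add_sub_cancel]

theorem stmt13_general {d : ℕ} (Ω Γ : Set (EuclideanSpace ℝ (Fin d)))
    (hΓcl : IsClosed Γ) (hΓne : Γ.Nonempty) (hΓsub : Γ ⊆ closure Ω)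
    (D : ℝ)
    (hgeo : ∀ x ∈ closure Ω, ∀ y ∈ closure Ω, ∃ ℓ : ℝ, 0 ≤ ℓ ∧ ℓ ≤ D * ‖x - y‖ ∧
      ∃ c : ℝ → EuclideanSpace ℝ (Fin d), c 0 = x ∧ c ℓ = y ∧
        (∀ s ∈ Set.Icc (0:ℝ) ℓ, c s ∈ closure Ω) ∧ LipschitzOnWith 1 c (Set.Icc (0:ℝ) ℓ))
    (k : ℝ → EuclideanSpace ℝ (Fin d) → ℝ)
    (Kmin Kmax : ℝ) (hKmin : 0 < Kmin)
    (hk : ∀ t ≥ (0:ℝ), ∀ x ∈ closure Ω, Kmin ≤ k t x ∧ k t x ≤ Kmax)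
    (t₀ : ℝ) (ht₀ : 0 ≤ t₀) (x₀ : EuclideanSpace ℝ (Fin d)) (hx₀ : x₀ ∈ closure Ω) :
    sInf {T : ℝ | 0 ≤ T ∧
        ∃ (γ u : ℝ → EuclideanSpace ℝ (Fin d)),
          γ t₀ = x₀ ∧ Continuous γ ∧
          (∀ t ≥ t₀, γ t ∈ closure Ω) ∧ (∀ t, ‖u t‖ ≤ 1) ∧
          (∀ t ≥ t₀, γ t = x₀ + ∫ s in t₀..t, k s (γ s) • u s) ∧
          γ (t₀ + T) ∈ Γ}
      ≤ D / Kmin * Metric.infDist x₀ Γ := by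
  obtain ⟨y, hyΓ, hdy⟩ := hΓcl.exists_infDist_eq_dist hΓne x₀
  obtain ⟨ℓ, hℓ0, hℓD, c, hc0, hcℓ, hcΩ, hc⟩ := hgeo x₀ hx₀ y (hΓsub hyΓ)
  lift Kmin to ℝ≥0 using hKmin.le
  obtain ⟨γ, hγ, hγ0, hγℓ, hγc⟩ :=
    hc.exists_lipschitzWith_traversal hℓ0 (by exact_mod_cast hKmin) t₀
  have hγΩ : ∀ t, γ t ∈ closure Ω := fun t => MapsTo.image_subset hcΩ (hγc t)
  obtain ⟨u, hu, hγu⟩ := hγ.exists_unit_control (k := k) (by exact_mod_cast hKmin)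
    fun t ht => (hk t (ht₀.trans ht) _ (hγΩ t)).1
  rw [hγ0, hc0] at hγu
  refine le_trans (csInf_le ⟨0, fun _ hT => hT.1⟩ ⟨by positivity, γ, u, hγ0.trans hc0,
    hγ.continuous, fun t _ => hγΩ t, hu, hγu, hγℓ ▸ hcℓ ▸ hyΓ⟩) ?_
  rw [hdy, dist_eq_norm, div_mul_eq_mul_div]
  gcongr

/-- the value function of the minimal time problem (defined as the infimum
of arrival times over admissible trajectories in `Ω̄`) satisfies
`φ(t₀,x₀) ≤ (D/Kmin) d(x₀,Γ)`; in particular it is bounded. -/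
theorem stmt13 {d : ℕ} (Ω Γ : Set (EuclideanSpace ℝ (Fin d)))
    (hΩo : IsOpen Ω) (hΩb : Bornology.IsBounded Ω)
    (hΓcl : IsClosed Γ) (hΓne : Γ.Nonempty) (hΓsub : Γ ⊆ closure Ω)
    (D : ℝ) (hD : 0 < D)
    (hgeo : ∀ x ∈ closure Ω, ∀ y ∈ closure Ω, ∃ ℓ : ℝ, 0 ≤ ℓ ∧ ℓ ≤ D * ‖x - y‖ ∧
      ∃ c : ℝ → EuclideanSpace ℝ (Fin d), c 0 = x ∧ c ℓ = y ∧
        (∀ s ∈ Set.Icc (0:ℝ) ℓ, c s ∈ closure Ω) ∧ LipschitzOnWith 1 c (Set.Icc (0:ℝ) ℓ))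
    (k : ℝ → EuclideanSpace ℝ (Fin d) → ℝ) (Lk : NNReal)
    (hkLip : LipschitzOnWith Lk (fun p : ℝ × EuclideanSpace ℝ (Fin d) => k p.1 p.2)
      (Set.Ici (0:ℝ) ×ˢ closure Ω))
    (Kmin Kmax : ℝ) (hKmin : 0 < Kmin)
    (hk : ∀ t ≥ (0:ℝ), ∀ x ∈ closure Ω, Kmin ≤ k t x ∧ k t x ≤ Kmax)
    (t₀ : ℝ) (ht₀ : 0 ≤ t₀) (x₀ : EuclideanSpace ℝ (Fin d)) (hx₀ : x₀ ∈ closure Ω) :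
    sInf {T : ℝ | 0 ≤ T ∧
        ∃ (γ u : ℝ → EuclideanSpace ℝ (Fin d)),
          γ t₀ = x₀ ∧ Continuous γ ∧
          (∀ t ≥ t₀, γ t ∈ closure Ω) ∧ (∀ t, ‖u t‖ ≤ 1) ∧
          (∀ t ≥ t₀, γ t = x₀ + ∫ s in t₀..t, k s (γ s) • u s) ∧
          γ (t₀ + T) ∈ Γ}
      ≤ D / Kmin * Metric.infDist x₀ Γ :=
  stmt13_general Ω Γ hΓcl hΓne hΓsub D hgeo k Kmin Kmax hKmin hk t₀ ht₀ x₀ hx₀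
end
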